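/- Let q ≥ 1, let f : ℝ → ℝ be q-times continuously differentiable on [0,1] with feature function F(u) = |f^{(q)}(u)|^{1/q} satisfying ∫₀¹ F > 0, and let 0 = t₀ ≤ t₁ ≤ … ≤ t_M = 1 be an equidistributing partition for F into M spans. Suppose C : ℝ → ℝ is any function satisfying the local approximation bound sup_{I_i} |f − C| ≤ A · h_i^q · sup_{I_i} |f^{(q)}| on each span I_i (for some constant A > 0), and suppose F is locally comparable on each span: h_i · sup_{I_i} F ≤ B · ∫_{t_i}^{t_{i+1}} F for some constant B ≥ 1 and all i. Then for every span I_i, sup_{I_i} |f − C| ≤ A · B^q · ((∫₀¹ F)/M)^q. In particular the bound on the approximation error over each span does not depend on the width of the span. -/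
import Mathlib


open MeasureTheory

/-- Span-width-independent error bound for derivative-informed knot placement:
if on each span of an equidistributing partition for the feature function
`F = |f^{(q)}|^{1/q}` the approximant `C` satisfies the local bound
`sup_{I_i} |f − C| ≤ A · h_i^q · sup_{I_i} |f^{(q)}|`, and `F` is locally
comparable (`h_i · sup_{I_i} F ≤ B · ∫_{I_i} F`), then on every span
`sup_{I_i} |f − C| ≤ A · B^q · ((∫₀¹ F)/M)^q`. -/
theorem derivative_informed_error_bound
    (q M : ℕ) (hq : 1 ≤ q) (hM : 1 ≤ M)
    (f F C : ℝ → ℝ) (A B : ℝ) (hA : 0 < A) (hB : 1 ≤ B)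
    (hf : ContDiffOn ℝ q f (Set.Icc 0 1))
    (hF : ∀ u : ℝ, F u = |iteratedDerivWithin q f (Set.Icc 0 1) u| ^ ((1:ℝ)/q))
    (hFint : 0 < ∫ s in (0:ℝ)..1, F s)
    (t : Fin (M+1) → ℝ)
    (ht0 : t 0 = 0) (htM : t (Fin.last M) = 1) (hmono : Monotone t)
    (hequi : ∀ i : Fin M,
      ∫ s in (t i.castSucc)..(t i.succ), F s = (∫ s in (0:ℝ)..1, F s) / M)
    (happrox : ∀ i : Fin M,
      sSup ((fun x => |f x - C x|) '' Set.Icc (t i.castSucc) (t i.succ)) ≤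
        A * (t i.succ - t i.castSucc) ^ q *
          sSup ((fun x => |iteratedDerivWithin q f (Set.Icc 0 1) x|) ''
            Set.Icc (t i.castSucc) (t i.succ)))
    (hcomp : ∀ i : Fin M,
      (t i.succ - t i.castSucc) * sSup (F '' Set.Icc (t i.castSucc) (t i.succ)) ≤
        B * ∫ s in (t i.castSucc)..(t i.succ), F s) :
    ∀ i : Fin M,
      sSup ((fun x => |f x - C x|) '' Set.Icc (t i.castSucc) (t i.succ)) ≤
        A * B ^ q * ((∫ s in (0:ℝ)..1, F s) / M) ^ q := by
  intro i
  set a := t i.castSucc with ha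
  set b := t i.succ with hb
  have hab : a ≤ b := hmono (Fin.castSucc_le_succ i)
  have ha0 : (0:ℝ) ≤ a := by
    rw [← ht0]; exact hmono (Fin.zero_le _)
  have hb1 : b ≤ 1 := by
    rw [← htM]; exact hmono (Fin.le_last _)
  have hsub : Set.Icc a b ⊆ Set.Icc (0:ℝ) 1 :=
    Set.Icc_subset_Icc ha0 hb1
  set g := iteratedDerivWithin q f (Set.Icc (0:ℝ) 1) with hg
  have hqR : (q:ℝ) ≠ 0 := Nat.cast_ne_zero.mpr (by omega)
  -- |g x| = (F x)^q
  have hgF : ∀ x, |g x| = (F x) ^ q := by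
    intro x
    rw [hF x, ← Real.rpow_natCast (|g x| ^ ((1:ℝ)/q)) q,
      ← Real.rpow_mul (abs_nonneg _)]
    rw [one_div, inv_mul_cancel₀ hqR, Real.rpow_one]
  -- continuity of g then F on Icc a b
  have hgc : ContinuousOn g (Set.Icc (0:ℝ) 1) :=
    hf.continuousOn_iteratedDerivWithin le_rfl (uniqueDiffOn_Icc one_pos)
  have hFc : ContinuousOn F (Set.Icc a b) := by
    apply ContinuousOn.congr (f := fun x => |g x| ^ ((1:ℝ)/q))
    · exact ((hgc.mono hsub).abs).rpow_const
        (fun x _ => Or.inr (by positivity))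
    · intro x _; exact hF x
  have hne : (Set.Icc a b).Nonempty := Set.nonempty_Icc.mpr hab
  have hneF : (F '' Set.Icc a b).Nonempty := hne.image _
  have hbdd : BddAbove (F '' Set.Icc a b) :=
    isCompact_Icc.bddAbove_image hFc
  set MF := sSup (F '' Set.Icc a b) with hMF
  have hFle : ∀ x ∈ Set.Icc a b, F x ≤ MF := fun x hx =>
    le_csSup hbdd (Set.mem_image_of_mem _ hx)
  have hF0 : ∀ x, 0 ≤ F x := fun x => by
    rw [hF x]; positivity
  have hMF0 : 0 ≤ MF :=
    le_trans (hF0 a) (hFle a (Set.left_mem_Icc.mpr hab))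
  -- sup of |g| bounded by MF^q
  have hMg : sSup ((fun x => |g x|) '' Set.Icc a b) ≤ MF ^ q := by
    apply Real.sSup_le
    · rintro y ⟨x, hx, rfl⟩
      show |g x| ≤ MF ^ q
      rw [hgF x]
      exact pow_le_pow_left₀ (hF0 x) (hFle x hx) q
    · positivity
  have hh0 : 0 ≤ b - a := sub_nonneg.mpr hab
  have hkey : (b - a) * MF ≤ B * ((∫ s in (0:ℝ)..1, F s) / M) := by
    have := hcomp i
    rwa [hequi i] at this
  have hIq : ((b - a) * MF) ^ q ≤ (B * ((∫ s in (0:ℝ)..1, F s) / M)) ^ q :=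
    pow_le_pow_left₀ (mul_nonneg hh0 hMF0) hkey q
  calc sSup ((fun x => |f x - C x|) '' Set.Icc a b)
      ≤ A * (b - a) ^ q * sSup ((fun x => |g x|) '' Set.Icc a b) := happrox i
    _ ≤ A * (b - a) ^ q * (MF ^ q) := by
        apply mul_le_mul_of_nonneg_left hMg; positivity
    _ = A * ((b - a) * MF) ^ q := by rw [mul_pow]; ring
    _ ≤ A * (B * ((∫ s in (0:ℝ)..1, F s) / M)) ^ q :=
        mul_le_mul_of_nonneg_left hIq hA.le
    _ = A * B ^ q * ((∫ s in (0:ℝ)..1, F s) / M) ^ q := by ring
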